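/- arXiv:2107.13329 — 4 statements merged into one kernel-verified Lean document; each statement's English description precedes it below -/
import Mathlib

section
/- Let V be a set and let p_b be an interior operator on the product of the powerset of V with itself, ordered componentwise by inclusion. Define p : 2^V → 2^V by p(X) = X₁ ∪ X₂, where (X₁, X₂) = p_b(X, X). Then p is an interior operator on the powerset of V ordered by inclusion: p is monotone, intensive, and idempotent. -/
/-! Write `p x = (f (x, x)).1 ⊔ (f (x, x)).2`. Idempotence of `p` holds because `f` takes the same
value at `(p x, p x)` and at `(x, x)`: since `(p x, p x) ≤ (x, x)` one inequality is monotonicity,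
and since `f (x, x) ≤ (p x, p x)` the other is `f (x, x) = f (f (x, x)) ≤ f (p x, p x)`. -/

section DiagSup

variable {α : Type*} [SemilatticeSup α] {f : α × α → α × α}

def diagSup (f : α × α → α × α) (x : α) : α :=
  (f (x, x)).1 ⊔ (f (x, x)).2

theorem monotone_diagSup (hmono : Monotone f) : Monotone (diagSup f) := fun _ _ hxy =>
  have h := hmono (show (_, _) ≤ (_, _) from ⟨hxy, hxy⟩)
  sup_le_sup h.1 h.2

theorem diagSup_le (hint : ∀ x, f x ≤ x) (x : α) : diagSup f x ≤ x :=
  sup_le (hint (x, x)).1 (hint (x, x)).2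

theorem le_diag_diagSup (x : α) : f (x, x) ≤ (diagSup f x, diagSup f x) :=
  ⟨le_sup_left, le_sup_right⟩

theorem apply_diag_diagSup (hmono : Monotone f) (hint : ∀ x, f x ≤ x)
    (hidem : ∀ x, f (f x) = f x) (x : α) :
    f (diagSup f x, diagSup f x) = f (x, x) := by
  apply le_antisymm
  · exact hmono ⟨diagSup_le hint x, diagSup_le hint x⟩
  · calc f (x, x) = f (f (x, x)) := (hidem (x, x)).symm
      _ ≤ f (diagSup f x, diagSup f x) := hmono (le_diag_diagSup x)

theorem diagSup_diagSup (hmono : Monotone f) (hint : ∀ x, f x ≤ x)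
    (hidem : ∀ x, f (f x) = f x) (x : α) :
    diagSup f (diagSup f x) = diagSup f x := by
  rw [diagSup, apply_diag_diagSup hmono hint hidem, diagSup]

end DiagSup

/-- If `pb` is an interior operator on `2^V × 2^V` (ordered
componentwise), then `p` defined by `p X = X₁ ∪ X₂` where
`(X₁, X₂) = pb (X, X)` is an interior operator on `2^V`: monotone, intensive
and idempotent. -/
theorem union_of_bicore_is_interior {V : Type*}
    (pb : Set V × Set V → Set V × Set V)
    (hmono : Monotone pb)
    (hint : ∀ X : Set V × Set V, pb X ≤ X)
    (hidem : ∀ X : Set V × Set V, pb (pb X) = pb X) :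
    Monotone (fun X : Set V => (pb (X, X)).1 ∪ (pb (X, X)).2) ∧
    (∀ X : Set V, (pb (X, X)).1 ∪ (pb (X, X)).2 ⊆ X) ∧
    (∀ X : Set V,
      (fun X : Set V => (pb (X, X)).1 ∪ (pb (X, X)).2)
        ((fun X : Set V => (pb (X, X)).1 ∪ (pb (X, X)).2) X) =
      (pb (X, X)).1 ∪ (pb (X, X)).2) :=
  ⟨monotone_diagSup hmono, diagSup_le hint, diagSup_diagSup hmono hint hidem⟩
end

section
/- Let T and V be types, let E ⊆ T × V × V be a symmetric, loopless set of temporal interactions such that for every time t and node v the set {u : (t, u, v) ∈ E} is finite, and let k be a natural number. Define the k-star-satellite core operator p : 2^{T×V} → 2^{T×V} by letting p(W') be the greatest subset C ⊆ W' such that every (t, v) ∈ C satisfies the k-star-satellite property relative to C. Then p is well defined and is an interior operator on the powerset of T × V: monotone, intensive, and idempotent. -/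
/-!
The core of `W'` is the union of all subsets of `W'` whose every element has the star-satellite
property relative to the subset itself. Degrees only grow when the substream grows (neighbourhoods
are finite, so `ncard` is monotone on them), hence the property is monotone in the subset, and the
union of such subsets is again one: it is the greatest. Monotonicity, intensivity and idempotence
of the core follow from this characterisation alone.
-/

/-- The neighbourhood of the time-node `(t, v)` in the substream of the
stream graph with interactions `E` induced by the time-node set `W'`. -/
def streamNbhd {T V : Type*} (E : Set (T × V × V)) (W' : Set (T × V))
    (t : T) (v : V) : Set V :=
  {u | (t, v) ∈ W' ∧ (t, u) ∈ W' ∧ (t, u, v) ∈ E}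

/-- The `k`-star-satellite property of a time-node `(t, v)` relative to a
time-node subset `W'`. -/
def starSatellite {T V : Type*} (E : Set (T × V × V)) (k : ℕ)
    (x : T × V) (W' : Set (T × V)) : Prop :=
  k ≤ (streamNbhd E W' x.1 x.2).ncard ∨
    ∃ u ∈ streamNbhd E W' x.1 x.2, k ≤ (streamNbhd E W' x.1 u).ncard

namespace Set

variable {α : Type*}

def selfSupportedCore (P : α → Set α → Prop) (W : Set α) : Set α :=
  ⋃₀ {C | C ⊆ W ∧ ∀ x ∈ C, P x C}

variable {P : α → Set α → Prop}

theorem selfSupportedCore_subset (W : Set α) : selfSupportedCore P W ⊆ W := by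
  rintro x ⟨C, ⟨hCW, -⟩, hxC⟩
  exact hCW hxC

theorem subset_selfSupportedCore {W C : Set α} (hCW : C ⊆ W) (hC : ∀ x ∈ C, P x C) :
    C ⊆ selfSupportedCore P W :=
  fun _ hx => ⟨C, ⟨hCW, hC⟩, hx⟩

theorem selfSupportedCore_supported (hP : ∀ x, Monotone (P x)) (W : Set α) :
    ∀ x ∈ selfSupportedCore P W, P x (selfSupportedCore P W) := by
  rintro x ⟨C, ⟨hCW, hC⟩, hxC⟩
  exact hP x (subset_selfSupportedCore hCW hC) (hC x hxC)

theorem selfSupportedCore_mono : Monotone (selfSupportedCore P) := by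
  rintro A B hAB x ⟨C, ⟨hCA, hC⟩, hxC⟩
  exact ⟨C, ⟨hCA.trans hAB, hC⟩, hxC⟩

theorem selfSupportedCore_idem (hP : ∀ x, Monotone (P x)) (W : Set α) :
    selfSupportedCore P (selfSupportedCore P W) = selfSupportedCore P W :=
  (selfSupportedCore_subset _).antisymm
    (subset_selfSupportedCore subset_rfl (selfSupportedCore_supported hP W))

end Set

section StarSatellite

variable {T V : Type*} (E : Set (T × V × V))

theorem streamNbhd_mono {A B : Set (T × V)} (h : A ⊆ B) (t : T) (v : V) :
    streamNbhd E A t v ⊆ streamNbhd E B t v :=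
  fun _ hu => ⟨h hu.1, h hu.2.1, hu.2.2⟩

theorem streamNbhd_finite (hfin : ∀ t : T, ∀ v : V, {u : V | (t, u, v) ∈ E}.Finite)
    (W' : Set (T × V)) (t : T) (v : V) : (streamNbhd E W' t v).Finite :=
  (hfin t v).subset fun _ hu => hu.2.2

theorem streamNbhd_ncard_mono (hfin : ∀ t : T, ∀ v : V, {u : V | (t, u, v) ∈ E}.Finite)
    {A B : Set (T × V)} (h : A ⊆ B) (t : T) (v : V) :
    (streamNbhd E A t v).ncard ≤ (streamNbhd E B t v).ncard :=
  Set.ncard_le_ncard (streamNbhd_mono E h t v) (streamNbhd_finite E hfin B t v)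

theorem starSatellite_mono (hfin : ∀ t : T, ∀ v : V, {u : V | (t, u, v) ∈ E}.Finite)
    (k : ℕ) (x : T × V) : Monotone (starSatellite E k x) := by
  rintro A B h (hdeg | ⟨u, hu, hdegu⟩)
  · exact Or.inl (hdeg.trans (streamNbhd_ncard_mono E hfin h _ _))
  · exact Or.inr ⟨u, streamNbhd_mono E h _ _ hu,
      hdegu.trans (streamNbhd_ncard_mono E hfin h _ _)⟩

end StarSatellite

theorem starSatellite_core_is_interior_general {T V : Type*} (E : Set (T × V × V))
    (hfin : ∀ t : T, ∀ v : V, {u : V | (t, u, v) ∈ E}.Finite)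
    (k : ℕ) :
    ∃ p : Set (T × V) → Set (T × V),
      (∀ W' : Set (T × V),
        p W' ⊆ W' ∧ (∀ x ∈ p W', starSatellite E k x (p W')) ∧
        ∀ C : Set (T × V), C ⊆ W' → (∀ x ∈ C, starSatellite E k x C) →
          C ⊆ p W') ∧
      Monotone p ∧ (∀ W' : Set (T × V), p W' ⊆ W') ∧
      (∀ W' : Set (T × V), p (p W') = p W') := by
  have hmono : ∀ x, Monotone (starSatellite E k x) := starSatellite_mono E hfin k
  refine ⟨Set.selfSupportedCore (starSatellite E k),
    fun W' => ⟨Set.selfSupportedCore_subset W', Set.selfSupportedCore_supported hmono W',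
      fun _ => Set.subset_selfSupportedCore⟩,
    Set.selfSupportedCore_mono, Set.selfSupportedCore_subset,
    Set.selfSupportedCore_idem hmono⟩

/-- the `k`-star-satellite core operator `p`, mapping `W'` to
the greatest subset `C ⊆ W'` all of whose elements satisfy the
`k`-star-satellite property relative to `C`, is well defined and is an
interior operator on `2^(T × V)`: monotone, intensive, idempotent. -/
theorem starSatellite_core_is_interior {T V : Type*} (E : Set (T × V × V))
    (hsymm : ∀ t : T, ∀ u v : V, (t, u, v) ∈ E ↔ (t, v, u) ∈ E)
    (hloopless : ∀ t : T, ∀ u : V, (t, u, u) ∉ E)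
    (hfin : ∀ t : T, ∀ v : V, {u : V | (t, u, v) ∈ E}.Finite)
    (k : ℕ) :
    ∃ p : Set (T × V) → Set (T × V),
      (∀ W' : Set (T × V),
        p W' ⊆ W' ∧ (∀ x ∈ p W', starSatellite E k x (p W')) ∧
        ∀ C : Set (T × V), C ⊆ W' → (∀ x ∈ C, starSatellite E k x C) →
          C ⊆ p W') ∧
      Monotone p ∧ (∀ W' : Set (T × V), p W' ⊆ W') ∧
      (∀ W' : Set (T × V), p (p W') = p W') :=
  starSatellite_core_is_interior_general E hfin k
end

section
/- Let T and V be types, let E ⊆ T × V × V be a set of directed temporal interactions such that for every time t and node v the sets {u : (t, v, u) ∈ E} and {u : (t, u, v) ∈ E} are finite, and let h, a be natural numbers. Let p_b(W₁, W₂) be the greatest pair (C₁, C₂) ⊆ (W₁, W₂) (componentwise) such that every (t, v) ∈ C₁ ∪ C₂ satisfies the h-a BHA property relative to (C₁, C₂). Then the h-a HA core operator p : 2^{T×V} → 2^{T×V} defined by p(W) = H ∪ A, where (H, A) = p_b(W, W), is an interior operator on the powerset of T × V: monotone, intensive, and idempotent. -/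
/-- Out-degree of the time-node `(t, v)` in the substream of the directed
stream graph `E` induced by the pair `(W₁, W₂)` of time-node subsets. -/
noncomputable def streamOutdeg {T V : Type*} (E : Set (T × V × V)) (W₁ W₂ : Set (T × V))
    (t : T) (v : V) : ℕ :=
  {u : V | (t, v) ∈ W₁ ∧ (t, u) ∈ W₂ ∧ (t, v, u) ∈ E}.ncard

/-- In-degree of the time-node `(t, v)` in the substream of the directed
stream graph `E` induced by the pair `(W₁, W₂)` of time-node subsets. -/
noncomputable def streamIndeg {T V : Type*} (E : Set (T × V × V)) (W₁ W₂ : Set (T × V))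
    (t : T) (v : V) : ℕ :=
  {u : V | (t, u) ∈ W₁ ∧ (t, v) ∈ W₂ ∧ (t, u, v) ∈ E}.ncard

/-- The `h`-`a` BHA property of a time-node `(t, v)` relative to a pair
`(W₁, W₂)` of time-node subsets. -/
def bhaProperty {T V : Type*} (E : Set (T × V × V)) (h a : ℕ)
    (x : T × V) (W₁ W₂ : Set (T × V)) : Prop :=
  (x ∈ W₁ → h ≤ streamOutdeg E W₁ W₂ x.1 x.2) ∧
  (x ∈ W₂ → a ≤ streamIndeg E W₁ W₂ x.1 x.2)

/-!
Since `pb` picks the greatest admissible sub-pair, it is monotone: `pb W` stays admissible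
inside any larger pair. For `p = diagCore pb`, the pair `pb (W, W)` is admissible and lies
below `(p W, p W)`, so maximality gives `pb (W, W) ≤ pb (p W, p W)`, which is the nontrivial half of `p (p W) = p W`.
-/

section GreatestSubpair

variable {α : Type*} [SemilatticeSup α] {P : α × α → Prop} {pb : α × α → α × α}

theorem monotone_of_forall_isGreatest (hpb : ∀ W, IsGreatest {C | C ≤ W ∧ P C} (pb W)) :
    Monotone pb :=
  fun _ _ hW => (hpb _).2 ⟨(hpb _).1.1.trans hW, (hpb _).1.2⟩

def diagCore (pb : α × α → α × α) (W : α) : α :=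
  (pb (W, W)).1 ⊔ (pb (W, W)).2

theorem diagCore_le (hpb : ∀ W, IsGreatest {C | C ≤ W ∧ P C} (pb W)) (W : α) :
    diagCore pb W ≤ W :=
  sup_le (hpb (W, W)).1.1.1 (hpb (W, W)).1.1.2

theorem diagCore_monotone (hpb : ∀ W, IsGreatest {C | C ≤ W ∧ P C} (pb W)) :
    Monotone (diagCore pb) := fun _ _ hW =>
  have hpair := monotone_of_forall_isGreatest hpb (show (_, _) ≤ (_, _) from ⟨hW, hW⟩)
  sup_le_sup hpair.1 hpair.2

theorem diagCore_diagCore (hpb : ∀ W, IsGreatest {C | C ≤ W ∧ P C} (pb W)) (W : α) :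
    diagCore pb (diagCore pb W) = diagCore pb W := by
  refine le_antisymm (diagCore_le hpb _) ?_
  have hle : pb (W, W) ≤ pb (diagCore pb W, diagCore pb W) :=
    (hpb _).2 ⟨⟨le_sup_left, le_sup_right⟩, (hpb (W, W)).1.2⟩
  exact sup_le_sup hle.1 hle.2

end GreatestSubpair

theorem ha_core_is_interior_general {T V : Type*} (E : Set (T × V × V))
    (h a : ℕ)
    (pb : Set (T × V) × Set (T × V) → Set (T × V) × Set (T × V))
    (hpb : ∀ W : Set (T × V) × Set (T × V),
      (pb W).1 ⊆ W.1 ∧ (pb W).2 ⊆ W.2 ∧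
      (∀ x ∈ (pb W).1 ∪ (pb W).2, bhaProperty E h a x (pb W).1 (pb W).2) ∧
      ∀ C : Set (T × V) × Set (T × V), C.1 ⊆ W.1 → C.2 ⊆ W.2 →
        (∀ x ∈ C.1 ∪ C.2, bhaProperty E h a x C.1 C.2) →
        C.1 ⊆ (pb W).1 ∧ C.2 ⊆ (pb W).2) :
    Monotone (fun W : Set (T × V) => (pb (W, W)).1 ∪ (pb (W, W)).2) ∧
    (∀ W : Set (T × V), (pb (W, W)).1 ∪ (pb (W, W)).2 ⊆ W) ∧
    (∀ W : Set (T × V),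
      (fun W : Set (T × V) => (pb (W, W)).1 ∪ (pb (W, W)).2)
        ((fun W : Set (T × V) => (pb (W, W)).1 ∪ (pb (W, W)).2) W) =
      (pb (W, W)).1 ∪ (pb (W, W)).2) := by
  have hgreatest : ∀ W, IsGreatest
      {C | C ≤ W ∧ ∀ x ∈ C.1 ∪ C.2, bhaProperty E h a x C.1 C.2} (pb W) := fun W =>
    let ⟨hsub₁, hsub₂, hbha, hmax⟩ := hpb W
    ⟨⟨⟨hsub₁, hsub₂⟩, hbha⟩, fun C ⟨⟨hC₁, hC₂⟩, hC⟩ => hmax C hC₁ hC₂ hC⟩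
  exact ⟨diagCore_monotone hgreatest, diagCore_le hgreatest, diagCore_diagCore hgreatest⟩

/-- the `h`-`a` HA core operator `p W = H ∪ A`, where `(H, A)`
is the greatest pair `(C₁, C₂) ⊆ (W, W)` all of whose elements satisfy the
`h`-`a` BHA property relative to `(C₁, C₂)`, is an interior operator on
`2^(T × V)`: monotone, intensive, idempotent. -/
theorem ha_core_is_interior {T V : Type*} (E : Set (T × V × V))
    (hfin_out : ∀ t : T, ∀ v : V, {u : V | (t, v, u) ∈ E}.Finite)
    (hfin_in : ∀ t : T, ∀ v : V, {u : V | (t, u, v) ∈ E}.Finite)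
    (h a : ℕ)
    (pb : Set (T × V) × Set (T × V) → Set (T × V) × Set (T × V))
    (hpb : ∀ W : Set (T × V) × Set (T × V),
      (pb W).1 ⊆ W.1 ∧ (pb W).2 ⊆ W.2 ∧
      (∀ x ∈ (pb W).1 ∪ (pb W).2, bhaProperty E h a x (pb W).1 (pb W).2) ∧
      ∀ C : Set (T × V) × Set (T × V), C.1 ⊆ W.1 → C.2 ⊆ W.2 →
        (∀ x ∈ C.1 ∪ C.2, bhaProperty E h a x C.1 C.2) →
        C.1 ⊆ (pb W).1 ∧ C.2 ⊆ (pb W).2) :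
    Monotone (fun W : Set (T × V) => (pb (W, W)).1 ∪ (pb (W, W)).2) ∧
    (∀ W : Set (T × V), (pb (W, W)).1 ∪ (pb (W, W)).2 ⊆ W) ∧
    (∀ W : Set (T × V),
      (fun W : Set (T × V) => (pb (W, W)).1 ∪ (pb (W, W)).2)
        ((fun W : Set (T × V) => (pb (W, W)).1 ∪ (pb (W, W)).2) W) =
      (pb (W, W)).1 ∪ (pb (W, W)).2) :=
  ha_core_is_interior_general E h a pb hpb
end

section
/- Let (L, ≤) be a partially ordered set of patterns, V a set, and let ext : L → 2^V and int : 2^V → L form an antitone Galois connection, i.e., for all q ∈ L and X ⊆ V, q ≤ int(X) if and only if X ⊆ ext(q). Let p be an interior operator on the powerset of V. Then the map f : L → L defined by f(q) = int(p(ext(q))) is a closure operator on L: f is monotone (q ≤ q' implies f(q) ≤ f(q')), extensive (q ≤ f(q)), and idempotent (f(f(q)) = f(q)). -/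
/-!
An interior operator on `Set V` is a closure operator on the order dual `(Set V)ᵒᵈ`, and an
antitone Galois connection between `L` and `Set V` is an ordinary Galois connection between `L`
and `(Set V)ᵒᵈ`. Conjugating a closure operator `c` by a Galois connection `l ⊣ u` gives the
closure operator `u ∘ c ∘ l`: it is the closure operator of the composite connection from `L`
to the closed elements of `c`.
-/

open OrderDual

def ClosureOperator.ofInterior {α : Type*} [Preorder α] (p : α → α) (hmono : Monotone p)
    (hint : ∀ x, p x ≤ x) (hidem : ∀ x, p (p x) = p x) : ClosureOperator αᵒᵈ where
  toFun x := toDual (p (ofDual x))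
  monotone' _ _ h := hmono h
  le_closure' := hint
  idempotent' := hidem

def GaloisConnection.conjClosureOperator {α β : Type*} [PartialOrder α] [PartialOrder β]
    {l : α → β} {u : β → α} (gc : GaloisConnection l u) (c : ClosureOperator β) :
    ClosureOperator α :=
  (gc.compose c.gi.gc).closureOperator

theorem GaloisConnection.toDual_comp_of_le_iff {α β : Type*} [Preorder α] [Preorder β]
    {l : α → β} {u : β → α} (h : ∀ a b, a ≤ u b ↔ b ≤ l a) :
    GaloisConnection (toDual ∘ l) (u ∘ ofDual) :=
  fun a b => (h a (ofDual b)).symm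

/-- given an antitone Galois connection `(ext, intt)` between a
poset of patterns `L` and `2^V`, and an interior operator `p` on `2^V`, the
map `f q = intt (p (ext q))` is a closure operator on `L`: monotone,
extensive and idempotent. -/
theorem closure_from_galois_and_interior {L V : Type*} [PartialOrder L]
    (ext : L → Set V) (intt : Set V → L)
    (hgal : ∀ (q : L) (X : Set V), q ≤ intt X ↔ X ⊆ ext q)
    (p : Set V → Set V)
    (hmono : Monotone p) (hint : ∀ X : Set V, p X ⊆ X)
    (hidem : ∀ X : Set V, p (p X) = p X) :
    Monotone (fun q : L => intt (p (ext q))) ∧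
    (∀ q : L, q ≤ intt (p (ext q))) ∧
    (∀ q : L, intt (p (ext (intt (p (ext q))))) = intt (p (ext q))) := by
  let f := (GaloisConnection.toDual_comp_of_le_iff hgal).conjClosureOperator
    (.ofInterior p hmono hint hidem)
  -- `f q` unfolds definitionally to `intt (p (ext q))`.
  exact ⟨f.monotone, f.le_closure, f.idempotent⟩
end
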